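/- The class of DHRSD PGFs equals the intersection of the classes of discrete SD and discrete HID PGFs; moreover for P ∈ DHRSD the component in the defining equation can be taken to be P_{c,p}(s) = P_c(s)·P_p(1-c+cs) where P_c(s) = P(s)/P(1-c+cs) and P_p(s) = P(s)/(p + (1-p)P(s)^k)^{1/k}. -/

import Mathlib

open Set

/-- `P` is (on `[0,1]`) the probability generating function of a `ℤ₊`-valued
random variable. -/
def IsPGF (P : ℝ → ℝ) : Prop :=
  ∃ q : PMF ℕ, ∀ s ∈ Set.Icc (0:ℝ) 1, P s = ∑' n : ℕ, (q n).toReal * s ^ n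

/-- `P` is discrete HRSD with parameter `k`. -/
def IsDHRSD (k : ℕ) (P : ℝ → ℝ) : Prop :=
  ∀ c ∈ Set.Ioc (0:ℝ) 1, ∀ p ∈ Set.Ico (0:ℝ) 1,
    ∃ Q : ℝ → ℝ, IsPGF Q ∧
      ∀ s ∈ Set.Icc (0:ℝ) 1,
        P s = Q s * (p + (1 - p) * (P (1 - c + c * s)) ^ k) ^ ((k : ℝ)⁻¹)

/-- `P` is discrete self-decomposable (Steutel–van Harn). -/
def IsDSD (P : ℝ → ℝ) : Prop :=
  ∀ c ∈ Set.Ioo (0:ℝ) 1, IsPGF (fun s => P s / P (1 - c + c * s))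

/-- `P` is discrete Harris infinitely divisible with parameter `k`. -/
def IsDHID (k : ℕ) (P : ℝ → ℝ) : Prop :=
  ∀ p ∈ Set.Ioo (0:ℝ) 1,
    ∃ Pp : ℝ → ℝ, IsPGF Pp ∧
      ∀ s ∈ Set.Icc (0:ℝ) 1,
        P s = Pp s / ((1 / p) - ((1 / p) - 1) * (Pp s) ^ k) ^ ((k : ℝ)⁻¹)

/-!
Write `t = 1 - c + c s` and `D = p + (1 - p) P(t)^k`. The DHRSD equation forces the component to
be `P / D^{1/k} = P_c(s) · P_p(t)`. Taking `p = 0` leaves `P_c`, taking `c = 1` leaves `P_p`;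
conversely, products of PGFs and PGFs evaluated at `t` are PGFs (independent sums, and
compounding with a Bernoulli law). Finally `P_p` is a PGF exactly when `P` is DHID at `p`: with
`u = P^k` and `v = P_p^k`, the DHID relation and the definition of `P_p` both read
`u = p v + (1 - p) u v`.
-/

open scoped ENNReal

namespace PMF

-- Valued in `ℝ≥0∞`, so that rearranging the double series below needs no summability.
noncomputable def pgf (q : PMF ℕ) (x : ℝ≥0∞) : ℝ≥0∞ := ∑' n, q n * x ^ n

lemma pgf_bind {α : Type*} (q : PMF α) (g : α → PMF ℕ) (x : ℝ≥0∞) :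
    (q.bind g).pgf x = ∑' a, q a * (g a).pgf x := by
  simp only [pgf, bind_apply, ← ENNReal.tsum_mul_right, ← ENNReal.tsum_mul_left, mul_assoc]
  exact ENNReal.tsum_comm

lemma pgf_pure (m : ℕ) (x : ℝ≥0∞) : (pure m : PMF ℕ).pgf x = x ^ m := by
  simp [pgf, pure_apply]

lemma pgf_map {α : Type*} (q : PMF α) (f : α → ℕ) (x : ℝ≥0∞) :
    (q.map f).pgf x = ∑' a, q a * x ^ f a := by
  simp [← bind_pure_comp, pgf_bind, pgf_pure]

lemma pgf_le_one (q : PMF ℕ) {x : ℝ≥0∞} (hx : x ≤ 1) : q.pgf x ≤ 1 :=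
  calc q.pgf x ≤ ∑' n, q n :=
        ENNReal.tsum_le_tsum fun n => mul_le_of_le_one_right' (pow_le_one' hx n)
    _ = 1 := q.tsum_coe

lemma toReal_pgf_ofReal (q : PMF ℕ) {s : ℝ} (hs : 0 ≤ s) :
    (q.pgf (ENNReal.ofReal s)).toReal = ∑' n, (q n).toReal * s ^ n := by
  rw [pgf, ENNReal.tsum_toReal_eq fun n => ENNReal.mul_ne_top (q.apply_ne_top n) (by simp)]
  simp [ENNReal.toReal_pow, hs]

noncomputable def addConv (q r : PMF ℕ) : PMF ℕ := q.bind fun i => r.map (i + ·)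

lemma pgf_addConv (q r : PMF ℕ) (x : ℝ≥0∞) : (q.addConv r).pgf x = q.pgf x * r.pgf x := by
  rw [addConv, pgf_bind, pgf, ← ENNReal.tsum_mul_right]
  refine tsum_congr fun i => ?_
  rw [pgf_map, pgf, ← ENNReal.tsum_mul_left, ← ENNReal.tsum_mul_left]
  exact tsum_congr fun j => by ring

/-- The law of `Y₁ + ⋯ + Y_N` for i.i.d. `Yᵢ ∼ r` and an independent `N ∼ q`. -/
noncomputable def compound (q r : PMF ℕ) : PMF ℕ := q.bind fun n => r.addConv^[n] (pure 0)

lemma pgf_compound (q r : PMF ℕ) (x : ℝ≥0∞) : (q.compound r).pgf x = q.pgf (r.pgf x) := by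
  have pgf_iterate (n : ℕ) : (r.addConv^[n] (pure 0)).pgf x = r.pgf x ^ n := by
    induction n with
    | zero => simp [pgf_pure]
    | succ n ih => rw [Function.iterate_succ_apply', pgf_addConv, ih, pow_succ']
  simp only [compound, pgf_bind, pgf_iterate]
  rfl

noncomputable def bernoulliNat (c : ℝ) (hc : c ∈ Icc (0 : ℝ) 1) : PMF ℕ :=
  (ofFintype (fun b : Bool => ENNReal.ofReal (if b then c else 1 - c)) (by
    rw [Fintype.sum_bool, if_pos rfl, if_neg Bool.false_ne_true,
      ← ENNReal.ofReal_add hc.1 (sub_nonneg.2 hc.2), add_sub_cancel, ENNReal.ofReal_one])).map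
    Bool.toNat

lemma pgf_bernoulliNat {c : ℝ} (hc : c ∈ Icc (0 : ℝ) 1) {s : ℝ} (hs : 0 ≤ s) :
    (bernoulliNat c hc).pgf (ENNReal.ofReal s) = ENNReal.ofReal (1 - c + c * s) := by
  rw [bernoulliNat, pgf_map, tsum_fintype, Fintype.sum_bool, ENNReal.ofReal_add
    (sub_nonneg.2 hc.2) (mul_nonneg hc.1 hs), ENNReal.ofReal_mul hc.1]
  simp [add_comm]

end PMF

lemma isPGF_iff {P : ℝ → ℝ} :
    IsPGF P ↔ ∃ q : PMF ℕ, ∀ s ∈ Icc (0 : ℝ) 1,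
      P s = (q.pgf (ENNReal.ofReal s)).toReal :=
  exists_congr fun q => forall₂_congr fun s hs => by rw [q.toReal_pgf_ofReal hs.1]

lemma IsPGF.congr {f g : ℝ → ℝ} (hf : IsPGF f) (h : EqOn g f (Icc 0 1)) : IsPGF g := by
  obtain ⟨q, hq⟩ := hf
  exact ⟨q, fun s hs => (h hs).trans (hq s hs)⟩

lemma isPGF_one : IsPGF fun _ => 1 :=
  isPGF_iff.2 ⟨PMF.pure 0, fun s _ => by simp [PMF.pgf_pure]⟩

lemma IsPGF.mem_Icc {f : ℝ → ℝ} (hf : IsPGF f) {s : ℝ} (hs : s ∈ Icc (0 : ℝ) 1) :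
    f s ∈ Icc (0 : ℝ) 1 := by
  obtain ⟨q, hq⟩ := isPGF_iff.1 hf
  rw [hq s hs]
  exact ⟨ENNReal.toReal_nonneg,
    ENNReal.toReal_le_of_le_ofReal zero_le_one
      (by simpa using q.pgf_le_one (by simpa using hs.2))⟩

lemma IsPGF.mul {f g : ℝ → ℝ} (hf : IsPGF f) (hg : IsPGF g) : IsPGF fun s => f s * g s := by
  obtain ⟨q, hq⟩ := isPGF_iff.1 hf
  obtain ⟨r, hr⟩ := isPGF_iff.1 hg
  exact isPGF_iff.2 ⟨q.addConv r, fun s hs => by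
    rw [hq s hs, hr s hs, PMF.pgf_addConv, ENNReal.toReal_mul]⟩

lemma IsPGF.comp {f g : ℝ → ℝ} (hf : IsPGF f) (hg : IsPGF g) : IsPGF fun s => f (g s) := by
  obtain ⟨q, hq⟩ := isPGF_iff.1 hf
  obtain ⟨r, hr⟩ := isPGF_iff.1 hg
  refine isPGF_iff.2 ⟨q.compound r, fun s hs => ?_⟩
  have hr_ne_top : r.pgf (ENNReal.ofReal s) ≠ ⊤ :=
    ne_top_of_le_ne_top ENNReal.one_ne_top (r.pgf_le_one (by simpa using hs.2))
  rw [hq _ (hg.mem_Icc hs), hr s hs, ENNReal.ofReal_toReal hr_ne_top, PMF.pgf_compound]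

lemma isPGF_thinning {c : ℝ} (hc : c ∈ Icc (0 : ℝ) 1) : IsPGF fun s => 1 - c + c * s :=
  isPGF_iff.2 ⟨PMF.bernoulliNat c hc, fun s hs => by
    rw [PMF.pgf_bernoulliNat hc hs.1, ENNReal.toReal_ofReal (by nlinarith [hs.1, hc.1, hc.2])]⟩

lemma IsPGF.comp_thinning {f : ℝ → ℝ} (hf : IsPGF f) {c : ℝ} (hc : c ∈ Icc (0 : ℝ) 1) :
    IsPGF fun s => f (1 - c + c * s) :=
  hf.comp (isPGF_thinning hc)

lemma one_sub_add_mul_mem_Icc {c s : ℝ} (hc : c ∈ Icc (0 : ℝ) 1)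
    (hs : s ∈ Icc (0 : ℝ) 1) :
    1 - c + c * s ∈ Icc (0 : ℝ) 1 :=
  ⟨by nlinarith [hc.1, hc.2, hs.1], by nlinarith [hc.1, hs.2]⟩

lemma add_one_sub_mul_pow_pos {p a : ℝ} (hp : p ∈ Icc (0 : ℝ) 1) (ha : 0 < a) (k : ℕ) :
    0 < p + (1 - p) * a ^ k := by
  rcases hp.1.eq_or_lt with rfl | hp0
  · simpa using pow_pos ha k
  · nlinarith [pow_pos ha k, hp.2]

lemma eq_div_rpow_inv_natCast_iff {k : ℕ} (hk : k ≠ 0) {x y D : ℝ} (hx : 0 ≤ x)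
    (hy : 0 ≤ y) (hD : 0 < D) : x = y / D ^ (k : ℝ)⁻¹ ↔ x ^ k * D = y ^ k := by
  have hroot : 0 < D ^ (k : ℝ)⁻¹ := Real.rpow_pos_of_pos hD _
  rw [eq_div_iff hroot.ne', ← pow_left_inj₀ (mul_nonneg hx hroot.le) hy hk, mul_pow,
    Real.rpow_inv_natCast_pow hD.le hk]

/-- In terms of `u = a ^ k` and `v = b ^ k`, both sides say `u = p v + (1 - p) u v`. -/
lemma harris_relation_comm {p u v : ℝ} (hp : p ≠ 0) :
    u * (1 / p - (1 / p - 1) * v) = v ↔ v * (p + (1 - p) * u) = u := by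
  constructor <;> intro h <;> field_simp at h ⊢ <;> linarith

lemma eq_harris_iff {k : ℕ} (hk : k ≠ 0) {p a b : ℝ} (hp : p ∈ Ioo (0 : ℝ) 1) (ha : 0 < a)
    (hb : b ∈ Icc (0 : ℝ) 1) :
    a = b / (1 / p - (1 / p - 1) * b ^ k) ^ (k : ℝ)⁻¹ ↔
      b = a / (p + (1 - p) * a ^ k) ^ (k : ℝ)⁻¹ := by
  have hE : 0 < 1 / p - (1 / p - 1) * b ^ k := by
    have h1p : 1 ≤ 1 / p := by rw [le_div_iff₀ hp.1]; linarith [hp.2]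
    nlinarith [pow_le_one₀ hb.1 hb.2 (n := k), pow_nonneg hb.1 k]
  rw [eq_div_rpow_inv_natCast_iff hk ha.le hb.1 hE,
    eq_div_rpow_inv_natCast_iff hk hb.1 ha.le
      (add_one_sub_mul_pow_pos (Ioo_subset_Icc_self hp) ha k)]
  exact harris_relation_comm hp.1.ne'

/-- The paper's `P_p`. -/
noncomputable def harrisComponent (k : ℕ) (p : ℝ) (P : ℝ → ℝ) (s : ℝ) : ℝ :=
  P s / (p + (1 - p) * P s ^ k) ^ (k : ℝ)⁻¹

/-- The paper's `P_{c,p}(s) = P_c(s) P_p(1 - c + c s)`. -/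
noncomputable def hrsdComponent (k : ℕ) (c p : ℝ) (P : ℝ → ℝ) (s : ℝ) : ℝ :=
  P s / P (1 - c + c * s) * harrisComponent k p P (1 - c + c * s)

section Components

variable {k : ℕ} {P : ℝ → ℝ}

lemma harrisComponent_zero (hk : k ≠ 0) {s : ℝ} (hs : 0 < P s) :
    harrisComponent k 0 P s = 1 := by
  rw [harrisComponent, zero_add, sub_zero, one_mul, Real.pow_rpow_inv_natCast hs.le hk,
    div_self hs.ne']

lemma eq_hrsdComponent_mul {c p s : ℝ} (hp : p ∈ Ico (0 : ℝ) 1) (hc : 0 < P (1 - c + c * s)) :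
    P s = hrsdComponent k c p P s * (p + (1 - p) * P (1 - c + c * s) ^ k) ^ (k : ℝ)⁻¹ := by
  have hroot : 0 < (p + (1 - p) * P (1 - c + c * s) ^ k) ^ (k : ℝ)⁻¹ :=
    Real.rpow_pos_of_pos (add_one_sub_mul_pow_pos (Ico_subset_Icc_self hp) hc k) _
  rw [hrsdComponent, harrisComponent, div_mul_div_cancel₀ hc.ne', div_mul_cancel₀ _ hroot.ne']

lemma isDHRSD_iff (hpos : ∀ s ∈ Icc (0 : ℝ) 1, 0 < P s) :
    IsDHRSD k P ↔
      ∀ c ∈ Ioc (0 : ℝ) 1, ∀ p ∈ Ico (0 : ℝ) 1, IsPGF (hrsdComponent k c p P) := by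
  refine forall₂_congr fun c hc => forall₂_congr fun p hp => ⟨?_, fun h => ⟨_, h, ?_⟩⟩
  · rintro ⟨Q, hQ, hPQ⟩
    refine hQ.congr fun s hs => ?_
    have ht := hpos _ (one_sub_add_mul_mem_Icc (Ioc_subset_Icc_self hc) hs)
    have hroot : 0 < (p + (1 - p) * P (1 - c + c * s) ^ k) ^ (k : ℝ)⁻¹ :=
      Real.rpow_pos_of_pos (add_one_sub_mul_pow_pos (Ico_subset_Icc_self hp) ht k) _
    exact mul_right_cancel₀ hroot.ne' ((eq_hrsdComponent_mul hp ht).symm.trans (hPQ s hs))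
  · exact fun s hs =>
      eq_hrsdComponent_mul hp (hpos _ (one_sub_add_mul_mem_Icc (Ioc_subset_Icc_self hc) hs))

lemma isDHID_iff (hpos : ∀ s ∈ Icc (0 : ℝ) 1, 0 < P s) (hk : k ≠ 0) :
    IsDHID k P ↔ ∀ p ∈ Ioo (0 : ℝ) 1, IsPGF (harrisComponent k p P) := by
  refine forall₂_congr fun p hp => ⟨?_, fun h => ⟨_, h, fun s hs => ?_⟩⟩
  · rintro ⟨Pp, hPp, hPPp⟩
    exact hPp.congr fun s hs =>
      ((eq_harris_iff hk hp (hpos s hs) (hPp.mem_Icc hs)).1 (hPPp s hs)).symm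
  · exact (eq_harris_iff hk hp (hpos s hs) (h.mem_Icc hs)).2 rfl

lemma IsDHRSD.isDSD (hpos : ∀ s ∈ Icc (0 : ℝ) 1, 0 < P s) (hk : k ≠ 0)
    (h : IsDHRSD k P) : IsDSD P := fun c hc =>
  ((isDHRSD_iff hpos).1 h c ⟨hc.1, hc.2.le⟩ 0 ⟨le_rfl, one_pos⟩).congr fun s hs => by
    rw [hrsdComponent, harrisComponent_zero hk
      (hpos _ (one_sub_add_mul_mem_Icc ⟨hc.1.le, hc.2.le⟩ hs)), mul_one]

lemma IsDHRSD.isDHID (hpos : ∀ s ∈ Icc (0 : ℝ) 1, 0 < P s) (hk : k ≠ 0)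
    (h : IsDHRSD k P) : IsDHID k P :=
  (isDHID_iff hpos hk).2 fun p hp =>
    ((isDHRSD_iff hpos).1 h 1 ⟨one_pos, le_rfl⟩ p ⟨hp.1.le, hp.2⟩).congr fun s hs => by
      rw [hrsdComponent, sub_self, zero_add, one_mul, div_self (hpos s hs).ne', one_mul]

lemma IsDSD.isDHRSD (hpos : ∀ s ∈ Icc (0 : ℝ) 1, 0 < P s) (hk : k ≠ 0)
    (hSD : IsDSD P) (hID : IsDHID k P) : IsDHRSD k P := by
  refine (isDHRSD_iff hpos).2 fun c hc p hp => ?_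
  have hPc : IsPGF fun s => P s / P (1 - c + c * s) := by
    rcases hc.2.lt_or_eq with hc1 | rfl
    · exact hSD c ⟨hc.1, hc1⟩
    · exact isPGF_one.congr fun s hs => by
        rw [sub_self, zero_add, one_mul, div_self (hpos s hs).ne']
  have hPp : IsPGF (harrisComponent k p P) := by
    rcases hp.1.eq_or_lt with rfl | hp0
    · exact isPGF_one.congr fun s hs => harrisComponent_zero hk (hpos s hs)
    · exact (isDHID_iff hpos hk).1 hID p ⟨hp0, hp.2⟩
  exact hPc.mul (hPp.comp_thinning (Ioc_subset_Icc_self hc))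

end Components

theorem dhrsd_iff_dsd_and_dhid_general (k : ℕ) (hk : 0 < k) (P : ℝ → ℝ)
    (hpos : ∀ s ∈ Icc (0:ℝ) 1, 0 < P s) :
    (IsDHRSD k P ↔ IsDSD P ∧ IsDHID k P) ∧
    (IsDHRSD k P →
      ∀ c ∈ Ioc (0:ℝ) 1, ∀ p ∈ Ico (0:ℝ) 1, ∀ s ∈ Icc (0:ℝ) 1,
        P s = (P s / P (1 - c + c * s)) *
          (P (1 - c + c * s) /
            (p + (1 - p) * (P (1 - c + c * s)) ^ k) ^ ((k : ℝ)⁻¹)) *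
          (p + (1 - p) * (P (1 - c + c * s)) ^ k) ^ ((k : ℝ)⁻¹)) :=
  ⟨⟨fun h => ⟨h.isDSD hpos hk.ne', h.isDHID hpos hk.ne'⟩,
      fun h => h.1.isDHRSD hpos hk.ne' h.2⟩,
    fun _ _ hc _ hp _ hs =>
      eq_hrsdComponent_mul hp (hpos _ (one_sub_add_mul_mem_Icc (Ioc_subset_Icc_self hc) hs))⟩

/-- Proposition 3.1: C_DHRSD = C_DSD ∩ C_DHID, and the component PGF can be chosen as
P_{c,p}(s) = P_c(s)·P_p(1-c+cs) with P_c(s) = P(s)/P(1-c+cs) and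
P_p(s) = P(s)/(p + (1-p)P(s)^k)^{1/k}. -/
theorem dhrsd_iff_dsd_and_dhid (k : ℕ) (hk : 0 < k) (P : ℝ → ℝ) (hP : IsPGF P)
    (hpos : ∀ s ∈ Icc (0:ℝ) 1, 0 < P s) :
    (IsDHRSD k P ↔ IsDSD P ∧ IsDHID k P) ∧
    (IsDHRSD k P →
      ∀ c ∈ Ioc (0:ℝ) 1, ∀ p ∈ Ico (0:ℝ) 1, ∀ s ∈ Icc (0:ℝ) 1,
        P s = (P s / P (1 - c + c * s)) *
          (P (1 - c + c * s) /
            (p + (1 - p) * (P (1 - c + c * s)) ^ k) ^ ((k : ℝ)⁻¹)) *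
          (p + (1 - p) * (P (1 - c + c * s)) ^ k) ^ ((k : ℝ)⁻¹)) :=
  dhrsd_iff_dsd_and_dhid_general k hk P hpos
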